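/- Let T be a Marco–Martens map on the probability space (X, ℬ, m) with Marco–Martens cover {X_j}_{j≥0}, let l_B be a Banach limit, and let μ be the set function defined by μ(A) := Σ_{j=0}^∞ l_B((m_n(A ∩ Y_j))_{n≥1}) for measurable A ⊆ X. If A ⊆ X is measurable and the sequence (m_n(A))_{n≥1} is bounded, then the limit lim_{l→∞} l_B((m_n(A ∩ ⋃_{j=l}^∞ Y_j))_{n≥1}) exists and μ(A) = l_B((m_n(A))_{n≥1}) − lim_{l→∞} l_B((m_n(A ∩ ⋃_{j=l}^∞ Y_j))_{n≥1}). -/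

import Mathlib

open MeasureTheory Set Filter

/-- `MMY Xs j = Y_j := X_j \ ⋃_{i < j} X_i`. -/
def MMY {X : Type*} (Xs : ℕ → Set X) (j : ℕ) : Set X := Xs j \ ⋃ i ∈ Set.Iio j, Xs i

/-- `T` is a Marco–Martens map on the probability space `(X, ℬ, m)` with Marco–Martens cover
`(X_j)_{j ≥ 0}` and constants `(K_j)_{j ≥ 0}` (condition (4)): `T` is measurable, maps
measurable sets to measurable sets, `m` is quasi-invariant under `T`, and conditions
(2)–(6) of the definition hold. -/
structure MarcoMartens {X : Type*} [MeasurableSpace X] (m : Measure X) (T : X → X)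
    (Xs : ℕ → Set X) (K : ℕ → ℝ) : Prop where
  measurable_T : Measurable T
  image_meas : ∀ A : Set X, MeasurableSet A → MeasurableSet (T '' A)
  quasi_invariant : m.map T ≪ m
  meas_Xs : ∀ j, MeasurableSet (Xs j)
  cover : m (univ \ ⋃ n, Xs n) = 0
  cond3 : ∀ i j : ℕ, ∃ k : ℕ, 0 < m (Xs i ∩ T^[k] ⁻¹' Xs j)
  one_le_K : ∀ j, 1 ≤ K j
  cond4 : ∀ j : ℕ, ∀ A B : Set X, MeasurableSet A → MeasurableSet B →
    A ⊆ Xs j → B ⊆ Xs j → ∀ n : ℕ,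
    m (T^[n] ⁻¹' A) * m B ≤ ENNReal.ofReal (K j) * (m A * m (T^[n] ⁻¹' B))
  cond5 : ∑' n : ℕ, m (T^[n] ⁻¹' Xs 0) = ⊤
  cond6 : Tendsto (fun l : ℕ => m (T '' ⋃ j ∈ Set.Ici l, MMY Xs j)) atTop (nhds 0)

/-- `mseq m T Xs A n = m_n(A) := (Σ_{k=0}^n m(T^{-k}A)) / (Σ_{k=0}^n m(T^{-k}X_0))`. -/
noncomputable def mseq {X : Type*} [MeasurableSpace X] (m : Measure X) (T : X → X)
    (Xs : ℕ → Set X) (A : Set X) (n : ℕ) : ℝ :=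
  (∑ k ∈ Finset.range (n + 1), (m (T^[k] ⁻¹' A)).toReal) /
    (∑ k ∈ Finset.range (n + 1), (m (T^[k] ⁻¹' Xs 0)).toReal)

/-- `lB` is a Banach limit: a positive, normalized, shift-invariant linear functional on the
space of bounded real sequences. -/
structure IsBanachLimit (lB : (ℕ → ℝ) → ℝ) : Prop where
  map_add : ∀ x y : ℕ → ℝ, (∃ C, ∀ n, |x n| ≤ C) → (∃ C, ∀ n, |y n| ≤ C) →
    lB (x + y) = lB x + lB y
  map_smul : ∀ (c : ℝ) (x : ℕ → ℝ), (∃ C, ∀ n, |x n| ≤ C) → lB (c • x) = c * lB x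
  nonneg : ∀ x : ℕ → ℝ, (∃ C, ∀ n, |x n| ≤ C) → (∀ n, 0 ≤ x n) → 0 ≤ lB x
  map_one : lB (fun _ => 1) = 1
  shift_invariant : ∀ x : ℕ → ℝ, (∃ C, ∀ n, |x n| ≤ C) → lB (fun n => x (n + 1)) = lB x

/-- `MMmu m T Xs lB A = μ(A) := Σ_{j=0}^∞ lB((m_n(A ∩ Y_j))_{n ≥ 1})`. -/
noncomputable def MMmu {X : Type*} [MeasurableSpace X] (m : Measure X) (T : X → X)
    (Xs : ℕ → Set X) (lB : (ℕ → ℝ) → ℝ) (A : Set X) : ℝ :=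
  ∑' j : ℕ, lB (fun n => mseq m T Xs (A ∩ MMY Xs j) (n + 1))

/-! The sets `Y_j` partition `X` up to an `m`-null set, and by quasi-invariance so do their
preimages under every `T^k`; hence `m_n(A) = Σ_{j<l} m_n(A ∩ Y_j) + m_n(A ∩ ⋃_{j≥l} Y_j)` for all
`n`. All these sequences are bounded by the bound on `m_n(A)`, so the Banach limit turns this
into `lB(m_n(A)) = Σ_{j<l} t_j + s_l` with `t_j, s_l ≥ 0`. The partial sums of `Σ t_j = μ(A)`
are thus bounded, the series converges, and `s_l = lB(m_n(A)) - Σ_{j<l} t_j → lB(m_n(A)) - μ(A)`. -/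

theorem MMY_eq_disjointed {X : Type*} (Xs : ℕ → Set X) : MMY Xs = disjointed Xs := by
  funext j
  rw [disjointed_eq_inter_compl, MMY, Set.sdiff_eq, compl_iUnion₂]
  rfl

theorem measure_eq_sum_range_add_measure_inter_biUnion_Ici {X : Type*} [MeasurableSpace X]
    {ν : Measure X} {Y : ℕ → Set X} (hY : ∀ j, MeasurableSet (Y j))
    (hdisj : Pairwise (Function.onFun Disjoint Y)) (hcover : ν (⋃ j, Y j)ᶜ = 0)
    {A : Set X} (hA : MeasurableSet A) (l : ℕ) :
    ν A = ∑ j ∈ Finset.range l, ν (A ∩ Y j) + ν (A ∩ ⋃ j ∈ Ici l, Y j) := by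
  have hdisjA : Pairwise (Function.onFun Disjoint fun j => A ∩ Y j) := fun i j hij =>
    (hdisj hij).mono inter_subset_right inter_subset_right
  have htail : A ∩ ⋃ j ∈ Ici l, Y j = ⋃ j, A ∩ Y (j + l) := by
    simp only [mem_Ici, ← inter_iUnion, ← iUnion_ge_eq_iUnion_nat_add]
  have hdisj_tail : Pairwise (Function.onFun Disjoint fun j => A ∩ Y (j + l)) :=
    fun i j hij => hdisjA (show i + l ≠ j + l by omega)
  rw [htail, measure_iUnion hdisj_tail fun j => hA.inter (hY _),
    ENNReal.summable.sum_add_tsum_nat_add', ← measure_iUnion hdisjA fun j => hA.inter (hY j),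
    ← inter_iUnion, measure_inter_conull hcover]

theorem MarcoMartens.quasiMeasurePreserving {X : Type*} [MeasurableSpace X] {m : Measure X}
    {T : X → X} {Xs : ℕ → Set X} {K : ℕ → ℝ} (hMM : MarcoMartens m T Xs K) :
    Measure.QuasiMeasurePreserving T m m :=
  ⟨hMM.measurable_T, hMM.quasi_invariant⟩

theorem MarcoMartens.measure_preimage_iterate_eq_sum_add {X : Type*} [MeasurableSpace X]
    {m : Measure X} {T : X → X} {Xs : ℕ → Set X} {K : ℕ → ℝ} (hMM : MarcoMartens m T Xs K)
    {A : Set X} (hA : MeasurableSet A) (l k : ℕ) :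
    m (T^[k] ⁻¹' A) = ∑ j ∈ Finset.range l, m (T^[k] ⁻¹' (A ∩ MMY Xs j))
      + m (T^[k] ⁻¹' (A ∩ ⋃ j ∈ Ici l, MMY Xs j)) := by
  have hf := hMM.quasiMeasurePreserving.iterate k
  have hY : ∀ j, MeasurableSet (MMY Xs j) := by
    rw [MMY_eq_disjointed]; exact MeasurableSet.disjointed hMM.meas_Xs
  have hcover : m (⋃ j, MMY Xs j)ᶜ = 0 := by
    rw [MMY_eq_disjointed, iUnion_disjointed, compl_eq_univ_sdiff]; exact hMM.cover
  have hsplit := measure_eq_sum_range_add_measure_inter_biUnion_Ici (ν := m)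
    (fun j => hf.measurable (hY j))
    (fun i j hij => ((MMY_eq_disjointed Xs ▸ disjoint_disjointed Xs) hij).preimage _)
    (by rw [← preimage_iUnion, ← preimage_compl]; exact hf.preimage_null hcover)
    (hf.measurable hA) l
  rwa [← preimage_iUnion₂, ← preimage_inter] at hsplit

section mseq

variable {X : Type*} [MeasurableSpace X] {m : Measure X} {T : X → X} {Xs : ℕ → Set X}

theorem mseq_nonneg (A : Set X) (n : ℕ) : 0 ≤ mseq m T Xs A n := by
  unfold mseq
  positivity

variable [IsFiniteMeasure m]

theorem mseq_mono {A B : Set X} (h : A ⊆ B) (n : ℕ) : mseq m T Xs A n ≤ mseq m T Xs B n := by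
  unfold mseq
  gcongr with k
  exact measure_ne_top m _

theorem exists_abs_mseq_succ_le_of_subset {A S : Set X} {C : ℝ}
    (hC : ∀ n, 1 ≤ n → mseq m T Xs A n ≤ C) (hS : S ⊆ A) :
    ∃ C, ∀ n, |mseq m T Xs S (n + 1)| ≤ C :=
  ⟨C, fun n => by
    rw [abs_of_nonneg (mseq_nonneg S _)]
    exact (mseq_mono hS _).trans (hC _ n.succ_pos)⟩

theorem MarcoMartens.mseq_eq_sum_add {K : ℕ → ℝ} (hMM : MarcoMartens m T Xs K) {A : Set X}
    (hA : MeasurableSet A) (l n : ℕ) :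
    mseq m T Xs A n = ∑ j ∈ Finset.range l, mseq m T Xs (A ∩ MMY Xs j) n
      + mseq m T Xs (A ∩ ⋃ j ∈ Ici l, MMY Xs j) n := by
  unfold mseq
  rw [← Finset.sum_div, ← add_div, Finset.sum_comm, ← Finset.sum_add_distrib]
  congr 1
  refine Finset.sum_congr rfl fun k _ => ?_
  rw [hMM.measure_preimage_iterate_eq_sum_add hA l k,
    ENNReal.toReal_add (ENNReal.sum_ne_top.2 fun _ _ => measure_ne_top _ _) (measure_ne_top _ _),
    ENNReal.toReal_sum fun _ _ => measure_ne_top _ _]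

end mseq

theorem exists_abs_sum_le {ι : Type*} (s : Finset ι) {f : ι → ℕ → ℝ}
    (hf : ∀ i ∈ s, ∃ C, ∀ n, |f i n| ≤ C) : ∃ C, ∀ n, |∑ i ∈ s, f i n| ≤ C := by
  choose! C hC using hf
  exact ⟨∑ i ∈ s, C i, fun n =>
    (Finset.abs_sum_le_sum_abs _ _).trans (Finset.sum_le_sum fun i hi => hC i hi n)⟩

namespace IsBanachLimit

variable {lB : (ℕ → ℝ) → ℝ}

theorem map_zero (hlB : IsBanachLimit lB) : lB 0 = 0 := by
  simpa using hlB.map_smul 0 (fun _ => 1) ⟨1, fun _ => by simp⟩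

theorem map_sum (hlB : IsBanachLimit lB) {ι : Type*} (s : Finset ι) {f : ι → ℕ → ℝ}
    (hf : ∀ i ∈ s, ∃ C, ∀ n, |f i n| ≤ C) :
    lB (fun n => ∑ i ∈ s, f i n) = ∑ i ∈ s, lB (f i) := by
  classical
  induction s using Finset.induction_on with
  | empty => exact hlB.map_zero
  | insert a s ha ih =>
    simp only [Finset.sum_insert ha]
    rw [Finset.forall_mem_insert] at hf
    rw [← ih hf.2, ← hlB.map_add _ _ hf.1 (exists_abs_sum_le s hf.2)]
    rfl

end IsBanachLimit

theorem tendsto_sub_tsum_of_eq_sum_range_add {t s : ℕ → ℝ} {L : ℝ} (ht : ∀ j, 0 ≤ t j)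
    (hs : ∀ l, 0 ≤ s l) (h : ∀ l, L = ∑ j ∈ Finset.range l, t j + s l) :
    Tendsto s atTop (nhds (L - ∑' j, t j)) := by
  have hsum : Summable t := summable_of_sum_range_le ht fun l => by linarith [h l, hs l]
  have hs_eq : s = fun l => L - ∑ j ∈ Finset.range l, t j := funext fun l => by linarith [h l]
  rw [hs_eq]
  exact hsum.hasSum.tendsto_sum_nat.const_sub L

/-- For a Marco–Martens map and a Banach limit `lB`: if `A` is measurable and the sequence
`(m_n(A))_{n ≥ 1}` is bounded, then `lim_{l → ∞} lB((m_n(A ∩ ⋃_{j ≥ l} Y_j))_{n ≥ 1})` exists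
and `μ(A) = lB((m_n(A))_{n ≥ 1}) − lim_{l → ∞} lB((m_n(A ∩ ⋃_{j ≥ l} Y_j))_{n ≥ 1})`. -/
theorem stmt12 {X : Type*} [MeasurableSpace X] (m : Measure X) [IsProbabilityMeasure m]
    (T : X → X) (Xs : ℕ → Set X) (K : ℕ → ℝ) (hMM : MarcoMartens m T Xs K)
    (lB : (ℕ → ℝ) → ℝ) (hlB : IsBanachLimit lB)
    (A : Set X) (hA : MeasurableSet A)
    (hbdd : ∃ C : ℝ, ∀ n : ℕ, 1 ≤ n → mseq m T Xs A n ≤ C) :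
    Tendsto
      (fun l : ℕ => lB (fun n => mseq m T Xs (A ∩ ⋃ j ∈ Set.Ici l, MMY Xs j) (n + 1)))
      atTop
      (nhds (lB (fun n => mseq m T Xs A (n + 1)) - MMmu m T Xs lB A)) := by
  obtain ⟨C, hC⟩ := hbdd
  have hbdd_sub : ∀ S ⊆ A, ∃ C, ∀ n, |mseq m T Xs S (n + 1)| ≤ C := fun _ =>
    exists_abs_mseq_succ_le_of_subset hC
  have hlB_nonneg : ∀ S ⊆ A, 0 ≤ lB fun n => mseq m T Xs S (n + 1) := fun S hS =>
    hlB.nonneg _ (hbdd_sub S hS) fun _ => mseq_nonneg S _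
  refine tendsto_sub_tsum_of_eq_sum_range_add (fun _ => hlB_nonneg _ inter_subset_left)
    (fun _ => hlB_nonneg _ inter_subset_left) fun l => ?_
  have hsplit : (fun n => mseq m T Xs A (n + 1))
      = (fun n => ∑ j ∈ Finset.range l, mseq m T Xs (A ∩ MMY Xs j) (n + 1))
        + fun n => mseq m T Xs (A ∩ ⋃ j ∈ Ici l, MMY Xs j) (n + 1) :=
    funext fun n => hMM.mseq_eq_sum_add hA l (n + 1)
  have hbdd_pieces : ∀ j ∈ Finset.range l, ∃ C, ∀ n, |mseq m T Xs (A ∩ MMY Xs j) (n + 1)| ≤ C :=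
    fun _ _ => hbdd_sub _ inter_subset_left
  rw [hsplit, hlB.map_add _ _ (exists_abs_sum_le _ hbdd_pieces) (hbdd_sub _ inter_subset_left),
    hlB.map_sum _ hbdd_pieces]
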